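/- Let φ₁, φ₂ ∈ ℂ^{Fin m × Fin k} be unit vectors such that the partial trace over the second factor of |φ₁⟩⟨φ₁| equals the partial trace over the second factor of |φ₂⟩⟨φ₂|. Then there exists a unitary k×k complex matrix U such that (1 ⊗ U)·φ₂ = φ₁, where 1 ⊗ U is the Kronecker product of the m×m identity matrix with U acting on the vector φ₂. (Lo–Chau/Mayers: purifications with the same reduced density matrix are related by a local unitary.) -/

import Mathlib

open Matrix BigOperators Kronecker
open scoped ComplexOrder

noncomputable section
open Classical

/-- The positive semidefinite square root of a matrix (junk value `0` if not PSD). -/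
def msqrt {d : Type*} [Fintype d] [DecidableEq d] (A : Matrix d d ℂ) : Matrix d d ℂ :=
  if h : A.PosSemidef then
    (h.1.eigenvectorUnitary : Matrix d d ℂ) * diagonal (((↑) : ℝ → ℂ) ∘ (Real.sqrt ·) ∘ h.1.eigenvalues) *
      (star h.1.eigenvectorUnitary : Matrix d d ℂ) else 0

/-- The trace norm `Tr √(AᴴA)` of a complex matrix. -/
def traceNorm {d : Type*} [Fintype d] [DecidableEq d] (A : Matrix d d ℂ) : ℝ :=
  ((msqrt (Aᴴ * A)).trace).re

/-- `ρ` is a density matrix: positive semidefinite with trace `1`. -/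
def IsDensityMatrix {d : Type*} [Fintype d] [DecidableEq d] (ρ : Matrix d d ℂ) : Prop :=
  ρ.PosSemidef ∧ ρ.trace = 1

/-- Von Neumann entropy, base 2 (junk value `0` if not Hermitian). -/
def vnEntropy {d : Type*} [Fintype d] [DecidableEq d] (ρ : Matrix d d ℂ) : ℝ :=
  if h : ρ.IsHermitian then -∑ i, (h.eigenvalues i) * Real.logb 2 (h.eigenvalues i) else 0

/-- The binary entropy function, base 2. -/
def binEntropy (p : ℝ) : ℝ := -p * Real.logb 2 p - (1 - p) * Real.logb 2 (1 - p)

/-- Fidelity of two matrices: `(Tr √(√ρ₁ ρ₂ √ρ₁))²`. -/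
def fidelity {d : Type*} [Fintype d] [DecidableEq d] (ρ₁ ρ₂ : Matrix d d ℂ) : ℝ :=
  (((msqrt (msqrt ρ₁ * ρ₂ * msqrt ρ₁)).trace).re) ^ 2

/-- Partial trace over the second tensor factor. -/
def ptraceSnd {m k : ℕ} (ρ : Matrix (Fin m × Fin k) (Fin m × Fin k) ℂ) :
    Matrix (Fin m) (Fin m) ℂ :=
  Matrix.of fun i j => ∑ l : Fin k, ρ (i, l) (j, l)

end

/-!
Reshape `φ` into the `k × m` matrix `B` with `B l i = φ (i, l)`. The reduced density matrix is
then `(Bᴴ * B)ᵀ`, and `1 ⊗ₖ U` acts as `B ↦ U * B`. Equal `Bᴴ * B` gives `‖B₁ x‖ = ‖B₂ x‖` for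
all `x`, so `B₂ x ↦ B₁ x` is a well-defined isometry on the range of `B₂`; it extends to a unitary
of `ℂᵏ`, which is the required `U`.
-/

namespace LinearMap

variable {𝕜 E F : Type*} [RCLike 𝕜] [NormedAddCommGroup E] [InnerProductSpace 𝕜 E]
  [NormedAddCommGroup F] [InnerProductSpace 𝕜 F] [FiniteDimensional 𝕜 F]

theorem exists_linearIsometryEquiv_apply_eq (S T : E →ₗ[𝕜] F) (h : ∀ x, ‖S x‖ = ‖T x‖) :
    ∃ V : F ≃ₗᵢ[𝕜] F, ∀ x, V (T x) = S x := by
  have hker : ker T ≤ ker S := fun x hx => by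
    rw [mem_ker] at hx ⊢
    rw [← norm_eq_zero, h, hx, norm_zero]
  let g : range T →ₗ[𝕜] F := (ker T).liftQ S hker ∘ₗ T.quotKerEquivRange.symm.toLinearMap
  have hg : ∀ x, g ⟨T x, mem_range_self T x⟩ = S x := fun x => by
    simp [g, quotKerEquivRange_symm_apply_image]
  let L : range T →ₗᵢ[𝕜] F := ⟨g, by rintro ⟨-, x, rfl⟩; rw [hg, h]; rfl⟩
  refine ⟨L.extend.toLinearIsometryEquiv rfl, fun x => ?_⟩
  simp [L.extend_apply ⟨T x, mem_range_self T x⟩, L, hg]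

end LinearMap

namespace Matrix

variable {𝕜 m n : Type*} [RCLike 𝕜] [Fintype m] [Fintype n] [DecidableEq m]

theorem norm_toEuclideanLin_eq_of_conjTranspose_mul_self_eq {B₁ B₂ : Matrix n m 𝕜}
    (h : B₁ᴴ * B₁ = B₂ᴴ * B₂) (x : EuclideanSpace 𝕜 m) :
    ‖toEuclideanLin B₁ x‖ = ‖toEuclideanLin B₂ x‖ := by
  have norm_sq : ∀ B : Matrix n m 𝕜,
      ‖toEuclideanLin B x‖ ^ 2 = RCLike.re (star x.ofLp ⬝ᵥ (Bᴴ * B) *ᵥ x.ofLp) := fun B => by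
    rw [← mulVec_mulVec, dotProduct_mulVec, ← star_mulVec, @norm_sq_eq_re_inner 𝕜,
      EuclideanSpace.inner_eq_star_dotProduct, ofLp_toLpLin, toLin'_apply, dotProduct_comm]
  rw [← sq_eq_sq₀ (norm_nonneg _) (norm_nonneg _), norm_sq, norm_sq, h]

theorem exists_mem_unitaryGroup_mul_eq_of_conjTranspose_mul_self_eq [DecidableEq n]
    {B₁ B₂ : Matrix n m 𝕜} (h : B₁ᴴ * B₁ = B₂ᴴ * B₂) :
    ∃ U ∈ unitaryGroup n 𝕜, U * B₂ = B₁ := by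
  obtain ⟨V, hV⟩ := (toEuclideanLin B₁).exists_linearIsometryEquiv_apply_eq (toEuclideanLin B₂)
    (norm_toEuclideanLin_eq_of_conjTranspose_mul_self_eq h)
  set U := (toEuclideanCLM (𝕜 := 𝕜) (n := n)).symm (Unitary.linearIsometryEquiv.symm V)
  have hU : ∀ w, U *ᵥ w = (V (WithLp.toLp 2 w)).ofLp := fun w => by
    rw [← ofLp_toEuclideanCLM, StarAlgEquiv.apply_symm_apply]
    rfl
  refine ⟨U, Unitary.map_mem _ (SetLike.coe_mem _), toLin'.injective (LinearMap.ext fun v => ?_)⟩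
  simpa [← mulVec_mulVec, hU] using congrArg WithLp.ofLp (hV (WithLp.toLp 2 v))

theorem one_kronecker_mulVec {α : Type*} [CommSemiring α] (U : Matrix n n α) (φ : m × n → α) :
    ((1 : Matrix m m α) ⊗ₖ U) *ᵥ φ = Function.uncurry fun i => U *ᵥ Function.curry φ i := by
  ext ⟨i, l⟩
  simp [mulVec, dotProduct, Fintype.sum_prod_type, one_apply, ite_mul]

end Matrix

theorem ptraceSnd_vecMulVec_star {m k : ℕ} (φ : Fin m × Fin k → ℂ) :
    ptraceSnd (vecMulVec φ (star φ)) = of (Function.curry φ) * (of (Function.curry φ))ᴴ := by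
  ext i j
  simp [ptraceSnd, vecMulVec_apply, mul_apply]

theorem local_unitary_of_eq_ptrace_general (m k : ℕ) (φ₁ φ₂ : Fin m × Fin k → ℂ)
    (h : ptraceSnd (Matrix.vecMulVec φ₁ (star φ₁)) =
         ptraceSnd (Matrix.vecMulVec φ₂ (star φ₂))) :
    ∃ U : Matrix (Fin k) (Fin k) ℂ, U ∈ Matrix.unitaryGroup (Fin k) ℂ ∧
      ((1 : Matrix (Fin m) (Fin m) ℂ) ⊗ₖ U) *ᵥ φ₂ = φ₁ := by
  have hB : ((of (Function.curry φ₁))ᵀ)ᴴ * (of (Function.curry φ₁))ᵀ =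
      ((of (Function.curry φ₂))ᵀ)ᴴ * (of (Function.curry φ₂))ᵀ := by
    simpa [ptraceSnd_vecMulVec_star, transpose_mul,
      conjTranspose_transpose_eq_transpose_conjTranspose] using congrArg transpose h
  obtain ⟨U, hU, hUB⟩ := exists_mem_unitaryGroup_mul_eq_of_conjTranspose_mul_self_eq hB
  refine ⟨U, hU, ?_⟩
  rw [one_kronecker_mulVec]
  ext ⟨i, l⟩
  simpa [mulVec, dotProduct, mul_apply] using congr_fun₂ hUB l i

/-- **Lo–Chau/Mayers.** Two purifications with the same reduced density matrix on
the first factor are related by a local unitary on the second factor. -/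
theorem local_unitary_of_eq_ptrace (m k : ℕ) (φ₁ φ₂ : Fin m × Fin k → ℂ)
    (hφ₁ : ∑ s, ‖φ₁ s‖ ^ 2 = 1) (hφ₂ : ∑ s, ‖φ₂ s‖ ^ 2 = 1)
    (h : ptraceSnd (Matrix.vecMulVec φ₁ (star φ₁)) =
         ptraceSnd (Matrix.vecMulVec φ₂ (star φ₂))) :
    ∃ U : Matrix (Fin k) (Fin k) ℂ, U ∈ Matrix.unitaryGroup (Fin k) ℂ ∧
      ((1 : Matrix (Fin m) (Fin m) ℂ) ⊗ₖ U) *ᵥ φ₂ = φ₁ :=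
  local_unitary_of_eq_ptrace_general m k φ₁ φ₂ h
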